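/- Let Ψ: ℝ → ℝ be a smooth, positive, π-periodic function, and suppose the even L₋₂ Minkowski problem with data Ψ is solvable: there exists a smooth, positive, π-periodic function s: ℝ → ℝ with s''(θ) + s(θ) > 0 for all θ and s(θ)·(s''(θ)+s(θ))^(1/3) = Ψ(θ) for all θ. Then Ψ has at least eight critical points in one period: there exist eight distinct points θ₁, …, θ₈ ∈ [0, 2π) with Ψ'(θᵢ) = 0 for i = 1, …, 8. -/

import Mathlib

open Real Set Filter

noncomputable section

/-- Radius of curvature of the curve with support function `f`: `𝔯[f] = f'' + f`. -/
def rad (f : ℝ → ℝ) (θ : ℝ) : ℝ := iteratedDeriv 2 f θ + f θ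

/-! Cubing the equation gives `Ψ³ = s³ (s'' + s)`, hence `(Ψ³)' = s² · L(s²) / 2` with
`L = d³/dθ³ + 4 d/dθ`. On `π`-periodic functions `L` is skew-adjoint and kills `1`, `cos 2θ` and
`sin 2θ`, so `L(s²)` is orthogonal to every `sin (θ - α) sin (θ - β)`. A continuous function with
this property has four zeros in every period of length `π`: if it had at most three, putting
`α, β` at its sign changes would make one of these integrals positive. The four zeros are critical
points of `Ψ`, and `π`-periodicity doubles them on `[0, 2π)`. -/

open MeasureTheory

theorem IsPreconnected.forall_pos_or_forall_neg {X : Type*} [TopologicalSpace X] {s : Set X}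
    (hs : IsPreconnected s) {f : X → ℝ} (hf : ContinuousOn f s) (hf0 : ∀ x ∈ s, f x ≠ 0) :
    (∀ x ∈ s, 0 < f x) ∨ ∀ x ∈ s, f x < 0 := by
  by_contra! h
  obtain ⟨⟨x, hx, hfx⟩, ⟨y, hy, hfy⟩⟩ := h
  obtain ⟨z, hz, hfz⟩ := hs.intermediate_value hx hy hf ⟨hfx, hfy⟩
  exact hf0 z hz hfz

theorem intervalIntegral_pos_of_pos_on_diff_countable {f : ℝ → ℝ} {a b : ℝ} {S : Set ℝ}
    (hS : S.Countable) (hfi : IntervalIntegrable f volume a b)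
    (hpos : ∀ x ∈ Ioo a b \ S, 0 < f x) (hab : a < b) : 0 < ∫ x in a..b, f x := by
  have hsupp : Ioo a b \ S ⊆ Function.support f ∩ Ioc a b := fun x hx =>
    ⟨(hpos x hx).ne', Ioo_subset_Ioc_self hx.1⟩
  have h₀ : 0 ≤ᵐ[volume.restrict (uIoc a b)] f := by
    rw [EventuallyLE, uIoc_of_le hab.le]
    refine ae_restrict_of_ae_eq_of_ae_restrict Ioo_ae_eq_Ioc ?_
    rw [ae_restrict_iff' measurableSet_Ioo]
    filter_upwards [hS.ae_notMem volume] with x hxS hx using (hpos x ⟨hx, hxS⟩).le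
  rw [intervalIntegral.integral_pos_iff_support_of_nonneg_ae' h₀ hfi]
  refine ⟨hab, ?_⟩
  calc 0 < volume (Ioo a b) := (Measure.measure_Ioo_pos _).mpr hab
    _ = volume (Ioo a b \ S) := (measure_sdiff_null (hS.measure_zero _)).symm
    _ ≤ _ := measure_mono hsupp

theorem sign_sin_of_abs_lt {x : ℝ} (hx : |x| < π) : SignType.sign (sin x) = SignType.sign x := by
  obtain ⟨h₁, h₂⟩ := abs_lt.mp hx
  rcases lt_trichotomy x 0 with h | rfl | h
  · rw [sign_neg h, sign_neg (sin_neg_of_neg_of_neg_pi_lt h h₁)]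
  · simp
  · rw [sign_pos h, sign_pos (sin_pos_of_pos_of_lt_pi h h₂)]

section Derivatives

variable {𝕜 E : Type*} [NontriviallyNormedField 𝕜] [NormedAddCommGroup E] [NormedSpace 𝕜 E]
  {f : 𝕜 → E}

theorem Function.Periodic.deriv {c : 𝕜} (h : Function.Periodic f c) :
    Function.Periodic (deriv f) c := fun x => by
  rw [← deriv_comp_add_const, h.funext]

theorem Function.Periodic.iteratedDeriv {c : 𝕜} (h : Function.Periodic f c) (k : ℕ) :
    Function.Periodic (iteratedDeriv k f) c := by
  induction k with
  | zero => simpa using h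
  | succ k ih => simpa only [iteratedDeriv_succ] using ih.deriv

theorem hasDerivAt_iteratedDeriv {n : WithTop ℕ∞} (hf : ContDiff 𝕜 n f) {k : ℕ} (hk : k < n) (x : 𝕜) :
    HasDerivAt (iteratedDeriv k f) (iteratedDeriv (k + 1) f x) x := by
  rw [iteratedDeriv_succ]
  exact (hf.differentiable_iteratedDeriv k hk x).hasDerivAt

end Derivatives

section PeriodicZeros

variable {β : Type*} [Zero β] {f : ℝ → β} {p a : ℝ} {n : ℕ} {z : Fin n → ℝ}

theorem Function.Periodic.exists_injective_zeros_Ico (hf : Function.Periodic f p) (hp : 0 < p)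
    (hz : Function.Injective z) (hza : ∀ i, z i ∈ Ico a (a + p)) (hfz : ∀ i, f (z i) = 0)
    (b : ℝ) :
    ∃ c : Fin n → ℝ, Function.Injective c ∧ (∀ i, c i ∈ Ico b (b + p)) ∧ ∀ i, f (c i) = 0 := by
  refine ⟨toIcoMod hp b ∘ z, fun i j hij => hz ?_, fun i => toIcoMod_mem_Ico hp b _,
    fun i => ?_⟩
  · rw [← (toIcoMod_eq_self hp).2 (hza i), ← (toIcoMod_eq_self hp).2 (hza j)]
    exact (toIcoMod_inj hp).2 ((toIcoMod_inj hp).1 hij)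
  · rw [Function.comp_apply, ← self_sub_toIcoDiv_zsmul, hf.sub_zsmul_eq]
    exact hfz i

theorem Function.Periodic.exists_injective_zeros_Ico_two_mul (hf : Function.Periodic f p)
    (hz : Function.Injective z) (hza : ∀ i, z i ∈ Ico a (a + p)) (hfz : ∀ i, f (z i) = 0) :
    ∃ c : Fin (n + n) → ℝ, Function.Injective c ∧ (∀ i, c i ∈ Ico a (a + 2 * p)) ∧
      ∀ i, f (c i) = 0 := by
  refine ⟨Fin.append z (z · + p), Fin.append_injective_iff.2 ⟨hz, fun i j h => hz ?_, ?_⟩,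
    Fin.addCases ?_ ?_, Fin.addCases ?_ ?_⟩
  · simpa using h
  · intro i j h
    linarith [(hza i).2, (hza j).1]
  · intro i
    simp only [Fin.append_left]
    exact ⟨(hza i).1, by linarith [(hza i).2, (hza i).1]⟩
  · intro i
    simp only [Fin.append_right]
    exact ⟨by linarith [(hza i).1, (hza i).2], by linarith [(hza i).2]⟩
  · intro i
    simpa only [Fin.append_left] using hfz i
  · intro i
    simpa only [Fin.append_right, hf (z i)] using hfz i

end PeriodicZeros

theorem hasDerivAt_sin_sub_mul_sin_sub (α β θ : ℝ) :
    HasDerivAt (fun t => sin (t - α) * sin (t - β)) (sin ((θ - α) + (θ - β))) θ := by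
  have h := ((hasDerivAt_id θ).sub_const α).sin.mul ((hasDerivAt_id θ).sub_const β).sin
  refine h.congr_deriv ?_
  simp only [id, sin_add]
  ring

/-- Lagrange's identity for `L = d³/dθ³ + 4 d/dθ`: the test function `w = sin (θ - α) sin (θ - β)`
satisfies `L w = 0`, so `(L v) w = (v'' w - v' w' + v (w'' + 4 w))'`. -/
theorem integral_deriv_three_add_four_deriv_mul_sin_sub_mul_sin_sub_eq_zero
    {v v₁ v₂ v₃ : ℝ → ℝ} (h₀ : ∀ θ, HasDerivAt v (v₁ θ) θ) (h₁ : ∀ θ, HasDerivAt v₁ (v₂ θ) θ)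
    (h₂ : ∀ θ, HasDerivAt v₂ (v₃ θ) θ) (hv₃ : Continuous v₃) (hp₀ : Function.Periodic v π)
    (hp₁ : Function.Periodic v₁ π) (hp₂ : Function.Periodic v₂ π) (a α β : ℝ) :
    ∫ θ in a..a + π, (v₃ θ + 4 * v₁ θ) * (sin (θ - α) * sin (θ - β)) = 0 := by
  have hv₁ : Continuous v₁ := continuous_iff_continuousAt.2 fun θ => (h₁ θ).continuousAt
  set B : ℝ → ℝ := fun θ => v₂ θ * (sin (θ - α) * sin (θ - β))
    - v₁ θ * sin ((θ - α) + (θ - β)) + 2 * cos (α - β) * v θ with hB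
  have hB' : ∀ θ, HasDerivAt B ((v₃ θ + 4 * v₁ θ) * (sin (θ - α) * sin (θ - β))) θ := by
    intro θ
    have h := (((h₂ θ).mul (hasDerivAt_sin_sub_mul_sin_sub α β θ)).sub
      ((h₁ θ).mul (((hasDerivAt_id θ).sub_const α).add
        ((hasDerivAt_id θ).sub_const β)).sin)).add ((h₀ θ).const_mul (2 * cos (α - β)))
    refine h.congr_deriv ?_
    rw [show α - β = (θ - β) - (θ - α) by ring]
    simp only [id, Pi.add_apply]
    generalize θ - α = x, θ - β = y
    simp only [sin_add, cos_add, cos_sub]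
    ring
  have hBper : B (a + π) = B a := by
    simp only [hB, hp₀ a, hp₁ a, hp₂ a, add_sub_right_comm a π, sin_add_pi,
      show a - α + π + (a - β + π) = a - α + (a - β) + 2 * π by ring, sin_add_two_pi]
    ring
  rw [intervalIntegral.integral_eq_sub_of_hasDerivAt (fun θ _ => hB' θ)
    ((by fun_prop : Continuous fun θ => (v₃ θ + 4 * v₁ θ) *
      (sin (θ - α) * sin (θ - β))).intervalIntegrable _ _), hBper, sub_self]

/-- On a window of length `π`, `sin (θ - α) * sin (θ - β)` has the sign of `(θ - α) * (θ - β)`. -/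
theorem integral_mul_sin_sub_mul_sin_sub_pos {F : ℝ → ℝ} (hF : Continuous F) {a α β : ℝ}
    (hα : α ∈ Icc a (a + π)) (hβ : β ∈ Icc a (a + π)) {S : Set ℝ} (hS : S.Countable)
    (hpos : ∀ θ ∈ Ioo a (a + π) \ S, 0 < F θ * ((θ - α) * (θ - β))) :
    0 < ∫ θ in a..a + π, F θ * (sin (θ - α) * sin (θ - β)) := by
  refine intervalIntegral_pos_of_pos_on_diff_countable hS
    ((by fun_prop : Continuous fun θ => F θ * (sin (θ - α) * sin (θ - β))).intervalIntegrable _ _)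
    (fun θ hθ => ?_) (by linarith [pi_pos])
  have h := hpos θ hθ
  obtain ⟨⟨haθ, hθa⟩, -⟩ := hθ
  have hθα : |θ - α| < π := abs_sub_lt_iff.2 ⟨by linarith [hα.1], by linarith [hα.2]⟩
  have hθβ : |θ - β| < π := abs_sub_lt_iff.2 ⟨by linarith [hβ.1], by linarith [hβ.2]⟩
  rw [← sign_eq_one_iff] at h ⊢
  simpa only [sign_mul, sign_sin_of_abs_lt hθα, sign_sin_of_abs_lt hθβ] using h

theorem exists_integral_mul_sin_sub_mul_sin_sub_pos {F : ℝ → ℝ} (hF : Continuous F)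
    {a p r : ℝ} (hap : a ≤ p) (hpr : p ≤ r) (hra : r ≤ a + π)
    (h₁ : (∀ θ ∈ Ioo a p, 0 < F θ) ∨ ∀ θ ∈ Ioo a p, F θ < 0)
    (h₂ : (∀ θ ∈ Ioo p r, 0 < F θ) ∨ ∀ θ ∈ Ioo p r, F θ < 0)
    (h₃ : ∀ θ ∈ Ioo r (a + π), 0 < F θ) :
    ∃ α β, 0 < ∫ θ in a..a + π, F θ * (sin (θ - α) * sin (θ - β)) := by
  have hpieces : ∀ θ ∈ Ioo a (a + π) \ {p, r},
      θ ∈ Ioo a p ∨ θ ∈ Ioo p r ∨ θ ∈ Ioo r (a + π) := by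
    rintro θ ⟨⟨haθ, hθa⟩, hθpr⟩
    simp only [mem_insert_iff, mem_singleton_iff, not_or] at hθpr
    rcases lt_or_gt_of_ne hθpr.1 with hθp | hpθ
    · exact Or.inl ⟨haθ, hθp⟩
    rcases lt_or_gt_of_ne hθpr.2 with hθr | hrθ
    · exact Or.inr (Or.inl ⟨hpθ, hθr⟩)
    · exact Or.inr (Or.inr ⟨hrθ, hθa⟩)
  have ha : a ∈ Icc a (a + π) := ⟨le_rfl, by linarith [pi_pos]⟩
  have hp : p ∈ Icc a (a + π) := ⟨hap, hpr.trans hra⟩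
  have hr : r ∈ Icc a (a + π) := ⟨hap.trans hpr, hra⟩
  have hS : ({p, r} : Set ℝ).Countable := (countable_singleton r).insert p
  -- `α` and `β` sit at the sign changes of `F` (`α = β = a` if there are none).
  rcases h₁ with h₁ | h₁ <;> rcases h₂ with h₂ | h₂
  · refine ⟨a, a, integral_mul_sin_sub_mul_sin_sub_pos hF ha ha hS fun θ hθ => ?_⟩
    have hθa : 0 < θ - a := sub_pos.2 hθ.1.1
    rcases hpieces θ hθ with h | h | h
    · exact mul_pos (h₁ θ h) (mul_pos hθa hθa)
    · exact mul_pos (h₂ θ h) (mul_pos hθa hθa)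
    · exact mul_pos (h₃ θ h) (mul_pos hθa hθa)
  · refine ⟨p, r, integral_mul_sin_sub_mul_sin_sub_pos hF hp hr hS fun θ hθ => ?_⟩
    rcases hpieces θ hθ with h | h | h
    · exact mul_pos (h₁ θ h) (mul_pos_of_neg_of_neg (by linarith [h.2]) (by linarith [h.2]))
    · exact mul_pos_of_neg_of_neg (h₂ θ h)
        (mul_neg_of_pos_of_neg (by linarith [h.1]) (by linarith [h.2]))
    · exact mul_pos (h₃ θ h) (mul_pos (by linarith [h.1]) (by linarith [h.1]))
  · refine ⟨a, p, integral_mul_sin_sub_mul_sin_sub_pos hF ha hp hS fun θ hθ => ?_⟩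
    rcases hpieces θ hθ with h | h | h
    · exact mul_pos_of_neg_of_neg (h₁ θ h)
        (mul_neg_of_pos_of_neg (by linarith [h.1]) (by linarith [h.2]))
    · exact mul_pos (h₂ θ h) (mul_pos (by linarith [h.1]) (by linarith [h.1]))
    · exact mul_pos (h₃ θ h) (mul_pos (by linarith [h.1]) (by linarith [h.1]))
  · refine ⟨a, r, integral_mul_sin_sub_mul_sin_sub_pos hF ha hr hS fun θ hθ => ?_⟩
    rcases hpieces θ hθ with h | h | h
    · exact mul_pos_of_neg_of_neg (h₁ θ h)
        (mul_neg_of_pos_of_neg (by linarith [h.1]) (by linarith [h.2]))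
    · exact mul_pos_of_neg_of_neg (h₂ θ h)
        (mul_neg_of_pos_of_neg (by linarith [h.1]) (by linarith [h.2]))
    · exact mul_pos (h₃ θ h) (mul_pos (by linarith [h.1]) (by linarith [h.1]))

theorem exists_zero_of_integral_mul_sin_sub_mul_sin_sub_eq_zero {F : ℝ → ℝ} (hF : Continuous F)
    {a p r : ℝ} (horth : ∀ α β, ∫ θ in a..a + π, F θ * (sin (θ - α) * sin (θ - β)) = 0)
    (hap : a ≤ p) (hpr : p ≤ r) (hra : r ≤ a + π) :
    ∃ z ∈ Ioo a (a + π), z ≠ p ∧ z ≠ r ∧ F z = 0 := by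
  by_contra! hF0
  have hsign : ∀ x y, a ≤ x → y ≤ a + π → (∀ θ ∈ Ioo x y, θ ≠ p ∧ θ ≠ r) →
      (∀ θ ∈ Ioo x y, 0 < F θ) ∨ ∀ θ ∈ Ioo x y, F θ < 0 := fun x y hx hy hxy =>
    isPreconnected_Ioo.forall_pos_or_forall_neg hF.continuousOn fun θ hθ =>
      hF0 θ ⟨hx.trans_lt hθ.1, hθ.2.trans_le hy⟩ (hxy θ hθ).1 (hxy θ hθ).2
  have h₁ := hsign a p le_rfl (hpr.trans hra) fun θ hθ => ⟨hθ.2.ne, (hθ.2.trans_le hpr).ne⟩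
  have h₂ := hsign p r hap hra fun θ hθ => ⟨hθ.1.ne', hθ.2.ne⟩
  rcases hsign r (a + π) (hap.trans hpr) le_rfl
      (fun θ hθ => ⟨(hpr.trans_lt hθ.1).ne', hθ.1.ne'⟩) with h₃ | h₃
  · obtain ⟨α, β, hpos⟩ := exists_integral_mul_sin_sub_mul_sin_sub_pos hF hap hpr hra h₁ h₂ h₃
    exact hpos.ne' (horth α β)
  · obtain ⟨α, β, hpos⟩ := exists_integral_mul_sin_sub_mul_sin_sub_pos hF.neg hap hpr hra
      (by simpa only [Pi.neg_apply, neg_pos, neg_lt_zero, or_comm] using h₁)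
      (by simpa only [Pi.neg_apply, neg_pos, neg_lt_zero, or_comm] using h₂)
      (by simpa only [Pi.neg_apply, neg_pos] using h₃)
    simp only [Pi.neg_apply, neg_mul, intervalIntegral.integral_neg, horth, neg_zero] at hpos
    exact hpos.false

theorem exists_four_zeros_of_integral_mul_sin_sub_mul_sin_sub_eq_zero {F : ℝ → ℝ}
    (hF : Continuous F)
    (horth : ∀ a α β, ∫ θ in a..a + π, F θ * (sin (θ - α) * sin (θ - β)) = 0) :
    ∃ a, ∃ z : Fin 4 → ℝ, Function.Injective z ∧ (∀ i, z i ∈ Ico a (a + π)) ∧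
      ∀ i, F (z i) = 0 := by
  have hπ := pi_pos
  obtain ⟨a, -, -, -, hFa⟩ := exists_zero_of_integral_mul_sin_sub_mul_sin_sub_eq_zero hF
    (horth 0) le_rfl le_rfl (by linarith)
  obtain ⟨b, hb, -, -, hFb⟩ := exists_zero_of_integral_mul_sin_sub_mul_sin_sub_eq_zero hF
    (horth a) le_rfl le_rfl (by linarith)
  obtain ⟨c, hc, hcb, -, hFc⟩ := exists_zero_of_integral_mul_sin_sub_mul_sin_sub_eq_zero hF
    (horth a) hb.1.le le_rfl hb.2.le
  obtain ⟨d, hd, hdb, hdc, hFd⟩ := exists_zero_of_integral_mul_sin_sub_mul_sin_sub_eq_zero hF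
    (horth a) (le_min hb.1.le hc.1.le) min_le_max (max_le hb.2.le hc.2.le)
  replace hdb : d ≠ b ∧ d ≠ c := by
    rcases le_total b c with h | h
    · rw [min_eq_left h] at hdb; rw [max_eq_right h] at hdc; exact ⟨hdb, hdc⟩
    · rw [min_eq_right h] at hdb; rw [max_eq_left h] at hdc; exact ⟨hdc, hdb⟩
  refine ⟨a, ![a, b, c, d], ?_, ?_, ?_⟩
  · have := hb.1.ne; have := hc.1.ne; have := hd.1.ne
    intro i j hij
    fin_cases i <;> fin_cases j <;> simp_all [eq_comm]
  · intro i
    fin_cases i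
    exacts [left_mem_Ico.2 (by linarith), Ioo_subset_Ico_self hb, Ioo_subset_Ico_self hc,
      Ioo_subset_Ico_self hd]
  · intro i
    fin_cases i <;> assumption

/-- `(s³ (s'' + s))' = s² ((s²)''' + 4 (s²)') / 2`. -/
theorem exists_four_critical_points_pow_three_mul_add {s s₁ s₂ s₃ : ℝ → ℝ}
    (h₀ : ∀ θ, HasDerivAt s (s₁ θ) θ) (h₁ : ∀ θ, HasDerivAt s₁ (s₂ θ) θ)
    (h₂ : ∀ θ, HasDerivAt s₂ (s₃ θ) θ) (hs₃ : Continuous s₃) (hp₀ : Function.Periodic s π)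
    (hp₁ : Function.Periodic s₁ π) (hp₂ : Function.Periodic s₂ π) :
    ∃ a, ∃ z : Fin 4 → ℝ, Function.Injective z ∧ (∀ i, z i ∈ Ico a (a + π)) ∧
      ∀ i, HasDerivAt (fun θ => s θ ^ 3 * (s₂ θ + s θ)) 0 (z i) := by
  have hs : Continuous s := continuous_iff_continuousAt.2 fun θ => (h₀ θ).continuousAt
  have hs₁ : Continuous s₁ := continuous_iff_continuousAt.2 fun θ => (h₁ θ).continuousAt
  have hs₂ : Continuous s₂ := continuous_iff_continuousAt.2 fun θ => (h₂ θ).continuousAt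
  have hv₀ : ∀ θ, HasDerivAt (fun t => s t * s t) (2 * (s θ * s₁ θ)) θ := fun θ =>
    ((h₀ θ).mul (h₀ θ)).congr_deriv (by ring)
  have hv₁ : ∀ θ, HasDerivAt (fun t => 2 * (s t * s₁ t)) (2 * (s₁ θ * s₁ θ + s θ * s₂ θ)) θ :=
    fun θ => ((h₀ θ).mul (h₁ θ)).const_mul 2
  have hv₂ : ∀ θ, HasDerivAt (fun t => 2 * (s₁ t * s₁ t + s t * s₂ t))
      (2 * (3 * s₁ θ * s₂ θ + s θ * s₃ θ)) θ := fun θ =>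
    ((((h₁ θ).mul (h₁ θ)).add ((h₀ θ).mul (h₂ θ))).const_mul 2).congr_deriv (by ring)
  obtain ⟨a, z, hz, hza, hFz⟩ := exists_four_zeros_of_integral_mul_sin_sub_mul_sin_sub_eq_zero
    (by fun_prop) (integral_deriv_three_add_four_deriv_mul_sin_sub_mul_sin_sub_eq_zero hv₀ hv₁ hv₂
      (by fun_prop) (fun θ => by simp only [hp₀ θ]) (fun θ => by simp only [hp₀ θ, hp₁ θ])
      (fun θ => by simp only [hp₀ θ, hp₁ θ, hp₂ θ]))
  refine ⟨a, z, hz, hza, fun i => ?_⟩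
  refine (((h₀ _).pow 3).mul ((h₂ _).add (h₀ _))).congr_deriv ?_
  simp only [Pi.add_apply, Pi.pow_apply]
  linear_combination (s (z i) ^ 2 / 2) * hFz i

theorem eight_critical_points_necessary_general
    (Ψ : ℝ → ℝ) (hΨsmooth : ContDiff ℝ (⊤ : ℕ∞) Ψ) (hΨpos : ∀ θ, 0 < Ψ θ)
    (hΨper : Function.Periodic Ψ π)
    (s : ℝ → ℝ) (hsmooth : ContDiff ℝ (⊤ : ℕ∞) s)
    (hper : Function.Periodic s π) (hconv : ∀ θ, 0 < rad s θ)
    (hsol : ∀ θ, s θ * rad s θ ^ ((1:ℝ) / 3) = Ψ θ) :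
    ∃ c : Fin 8 → ℝ, Function.Injective c ∧
      (∀ i, c i ∈ Ico (0:ℝ) (2 * π)) ∧ ∀ i, deriv Ψ (c i) = 0 := by
  have hs : ContDiff ℝ 3 s := hsmooth.of_le (WithTop.coe_le_coe.2 le_top)
  have hΨcube : (fun θ => Ψ θ ^ 3) = fun θ => s θ ^ 3 * (iteratedDeriv 2 s θ + s θ) := by
    ext θ
    rw [← hsol θ, mul_pow, ← rpow_natCast (rad s θ ^ _), ← rpow_mul (hconv θ).le]
    norm_num [rad]
  have hΨcrit : ∀ θ, HasDerivAt (fun θ => Ψ θ ^ 3) 0 θ → deriv Ψ θ = 0 := fun θ h => by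
    have h' := ((hΨsmooth.differentiable (by simp) θ).hasDerivAt.pow 3).unique h
    simpa [(hΨpos θ).ne'] using h'
  obtain ⟨a, z, hz, hza, hcrit⟩ := exists_four_critical_points_pow_three_mul_add
    (fun θ => by simpa using hasDerivAt_iteratedDeriv hs (k := 0) (by norm_num) θ)
    (hasDerivAt_iteratedDeriv hs (k := 1) (by norm_num))
    (hasDerivAt_iteratedDeriv hs (k := 2) (by norm_num)) (hs.continuous_iteratedDeriv 3 le_rfl)
    hper (hper.iteratedDeriv 1) (hper.iteratedDeriv 2)
  obtain ⟨c, hc, hc0, hcΨ⟩ := hΨper.deriv.exists_injective_zeros_Ico pi_pos hz hza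
    (fun i => hΨcrit _ (hΨcube ▸ hcrit i)) 0
  simpa only [zero_add] using hΨper.deriv.exists_injective_zeros_Ico_two_mul hc hc0 hcΨ

/-- If the even `L₋₂` Minkowski problem with smooth, positive,
`π`-periodic data `Ψ` is solvable, i.e. there is a smooth, positive, `π`-periodic
support function `s` with `s'' + s > 0` and `s (s'' + s)^(1/3) = Ψ`, then `Ψ` has at
least eight distinct critical points in `[0, 2π)`. -/
theorem eight_critical_points_necessary
    (Ψ : ℝ → ℝ) (hΨsmooth : ContDiff ℝ (⊤ : ℕ∞) Ψ) (hΨpos : ∀ θ, 0 < Ψ θ)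
    (hΨper : Function.Periodic Ψ π)
    (s : ℝ → ℝ) (hsmooth : ContDiff ℝ (⊤ : ℕ∞) s) (hpos : ∀ θ, 0 < s θ)
    (hper : Function.Periodic s π) (hconv : ∀ θ, 0 < rad s θ)
    (hsol : ∀ θ, s θ * rad s θ ^ ((1:ℝ) / 3) = Ψ θ) :
    ∃ c : Fin 8 → ℝ, Function.Injective c ∧
      (∀ i, c i ∈ Ico (0:ℝ) (2 * π)) ∧ ∀ i, deriv Ψ (c i) = 0 :=
  eight_critical_points_necessary_general Ψ hΨsmooth hΨpos hΨper s hsmooth hper hconv hsol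

end
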